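/- arXiv:1410.2500 — 4 statements merged into one kernel-verified Lean document; each statement's English description precedes it below -/
import Mathlib

section
/- The out-of-sample error rate of the full classifier satisfies the inclusion–exclusion identity p* = Σ_{S⊆R} Σ_{T⊆R−S} (−1)^{|T|} P(C_{S,T}), where the sum ranges over all subsets S of R and all subsets T of R−S. -/
open MeasureTheory Finset

noncomputable section

attribute [local instance] Classical.propDecidable

/-- The `k`-nearest-neighbor classifier based on the labeled sample `G`:
it labels `x` by the majority label among the `k` examples of `G` closest to `x`. -/
def knnLabel {X : Type*} [MetricSpace X] (k : ℕ) (G : List (X × Bool)) (x : X) : Bool :=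
  decide (k < 2 * (((G.mergeSort fun a b => decide (dist x a.1 ≤ dist x b.1)).take k).filter
      (fun p => p.2)).length)

/-- Distance from `x` to its `k`-th nearest neighbor among the points of the list `L`. -/
def kthDist {X : Type*} [MetricSpace X] (k : ℕ) (L : List X) (x : X) : ℝ :=
  ((L.map (dist x)).mergeSort fun a b => decide (a ≤ b)).getD (k - 1) 0

/-- Indices of the `i`-th block of `m` consecutive examples. -/
def blockIdx (n m : ℕ) {r : ℕ} (i : Fin r) : Finset (Fin n) :=
  Finset.univ.filter fun j => m * i.1 ≤ j.1 ∧ j.1 < m * (i.1 + 1)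

/-- Indices of `V_S`, the union of the validation subsets indexed by `S`. -/
def VIdx (n m r : ℕ) (S : Finset (Fin r)) : Finset (Fin n) :=
  S.biUnion (blockIdx n m)

/-- Indices of `(F − V) ∪ V_S`. -/
def trainIdx (n m r : ℕ) (S : Finset (Fin r)) : Finset (Fin n) :=
  (VIdx n m r Finset.univ)ᶜ ∪ VIdx n m r S

/-- The sub-sample of `F` indexed by `A` (as a list, in index order). -/
def subList {n : ℕ} {α : Type*} (F : Fin n → α) (A : Finset (Fin n)) : List α :=
  (A.sort (· ≤ ·)).map F

/-- `g_S`, the `k`-nn classifier based on `(F − V) ∪ V_S`. -/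
def gS {X : Type*} [MetricSpace X] (n m r k : ℕ) (F : Fin n → X × Bool)
    (S : Finset (Fin r)) (x : X) : Bool :=
  knnLabel k (subList F (trainIdx n m r S)) x

/-- `h(x)`, the distance from `x` to its `k`-th nearest neighbor in `F − V`. -/
def hDist {X : Type*} [MetricSpace X] (n m r k : ℕ) (F : Fin n → X × Bool) (x : X) : ℝ :=
  kthDist k (subList (fun j => (F j).1) (VIdx n m r Finset.univ)ᶜ) x

/-- `c_S(x)`: every `V_i` with `i ∈ S` has an example closer to `x` than `h(x)`. -/
def cCond {X : Type*} [MetricSpace X] (n m r k : ℕ) (F : Fin n → X × Bool)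
    (S : Finset (Fin r)) (x : X) : Prop :=
  ∀ i ∈ S, ∃ j ∈ blockIdx n m i, dist x (F j).1 < hDist n m r k F x

/-- `b_S(x)`: `c_S(x)` holds and no `V_i` with `i ∉ S` has an example closer to `x`
than `h(x)`. -/
def bCond {X : Type*} [MetricSpace X] (n m r k : ℕ) (F : Fin n → X × Bool)
    (S : Finset (Fin r)) (x : X) : Prop :=
  cCond n m r k F S x ∧
    ∀ i ∉ S, ¬ ∃ j ∈ blockIdx n m i, dist x (F j).1 < hDist n m r k F x

/-- The set `C_{S,T} = {(x,y) : c_{S∪T}(x) ∧ g_S(x) ≠ y}`. -/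
def CST {X : Type*} [MetricSpace X] (n m r k : ℕ) (F : Fin n → X × Bool)
    (S T : Finset (Fin r)) : Set (X × Bool) :=
  {p | cCond n m r k F (S ∪ T) p.1 ∧ gS n m r k F S p.1 ≠ p.2}

/-- Empirical frequency of the event `E` among the examples of `F` indexed by `A`. -/
def empFreq {X : Type*} {n : ℕ} (F : Fin n → X × Bool) (A : Finset (Fin n))
    (E : Set (X × Bool)) : ℝ :=
  ((A.filter fun j => F j ∈ E).card : ℝ) / (A.card : ℝ)

/-- `p*`, the out-of-sample error rate of the full classifier `g* = g_R`. -/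
def pStar {X : Type*} [MetricSpace X] [MeasurableSpace X] (n m r k : ℕ)
    (D : Measure (X × Bool)) (F : Fin n → X × Bool) : ℝ :=
  (D {p : X × Bool | gS n m r k F Finset.univ p.1 ≠ p.2}).toReal

/-- The pairs `(S, T)` with `S ⊆ R`, `T ⊆ R − S` and `S ∪ T ≠ R`. -/
def pairSet (r : ℕ) : Finset (Finset (Fin r) × Finset (Fin r)) :=
  Finset.univ.filter fun p => p.2 ⊆ p.1ᶜ ∧ p.1 ∪ p.2 ≠ Finset.univ

/-- `t_V`, the part of the inclusion-exclusion formula with `S ∪ T ≠ R`. -/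
def tV {X : Type*} [MetricSpace X] [MeasurableSpace X] (n m r k : ℕ)
    (D : Measure (X × Bool)) (F : Fin n → X × Bool) : ℝ :=
  ∑ p ∈ pairSet r, (-1 : ℝ) ^ p.2.card * (D (CST n m r k F p.1 p.2)).toReal

/-- `s_V`, the empirical counterpart of `t_V`, validated on `V_{R−(S∪T)}`. -/
def sV {X : Type*} [MetricSpace X] (n m r k : ℕ) (F : Fin n → X × Bool) : ℝ :=
  ∑ p ∈ pairSet r,
    (-1 : ℝ) ^ p.2.card * empFreq F (VIdx n m r (p.1 ∪ p.2)ᶜ) (CST n m r k F p.1 p.2)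

/-- Indices of `W`, the last `w` examples of `F`. -/
def WIdx (n w : ℕ) : Finset (Fin n) :=
  Finset.univ.filter fun j => n - w ≤ j.1

/-- `c_R'(x)`: every `V_i` has an example closer to `x` than the `k`-th nearest neighbor
of `x` in `(F − V) − W`. -/
def cR' {X : Type*} [MetricSpace X] (n m r k w : ℕ) (F : Fin n → X × Bool) (x : X) : Prop :=
  ∀ i : Fin r, ∃ j ∈ blockIdx n m i,
    dist x (F j).1 <
      kthDist k (subList (fun j => (F j).1) ((VIdx n m r Finset.univ)ᶜ \ WIdx n w)) x

/-- `P_W(c_R'(x))`, the empirical frequency of `c_R'` on `W`. -/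
def PWfreq {X : Type*} [MetricSpace X] (n m r k w : ℕ) (F : Fin n → X × Bool) : ℝ :=
  (((WIdx n w).filter fun j => cR' n m r k w F (F j).1).card : ℝ) / (w : ℝ)

/-- Almost-sure distinctness of distances: distances from `x` to the sample inputs are
pairwise distinct, and distances from each sample input to the others are pairwise
distinct. -/
def DistinctDists {X : Type*} [MetricSpace X] {n : ℕ} (F : Fin n → X × Bool) (x : X) : Prop :=
  (∀ i j : Fin n, i ≠ j → dist x (F i).1 ≠ dist x (F j).1) ∧
  (∀ i j l : Fin n, i ≠ j → i ≠ l → j ≠ l → dist (F i).1 (F j).1 ≠ dist (F i).1 (F l).1)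

/-- The error bound range `ε` of Theorem 1. -/
def epsBound {X : Type*} [MetricSpace X] (n m r k w : ℕ) (δ δW : ℝ)
    (F : Fin n → X × Bool) : ℝ :=
  (r : ℝ) * 3 ^ (r - 1) * Real.sqrt (Real.log (2 * r / δ) / (2 * m)) +
    2 ^ r * (PWfreq n m r k w F + Real.sqrt (Real.log (2 / δW) / (2 * w)))

end

/-!
Let `N(x)` be the set of blocks `V_i` holding an example closer to `x` than `h(x)`. Then
`c_U(x)` holds iff `U ⊆ N(x)`, so for fixed `S` the alternating sum over `T ⊆ R − S` of the
indicators of `C_{S,T}` collapses to `[S = N(x)] · [g_S(x) ≠ y]`, and the double sum to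
`[g_{N(x)}(x) ≠ y]`. When the distances from `x` to the sample are distinct, every example of a
block outside `N(x)` is beaten by the `k` examples of `F − V` within distance `h(x)`, so the `k`
nearest neighbours of `x` in `F` all lie in `(F − V) ∪ V_{N(x)}` and `g_{N(x)}(x) = g*(x)`.
Integrating this pointwise identity over `(x, y)` gives the claim for almost every `F`.
-/

namespace List

variable {α β : Type*} [LinearOrder β] (key : α → β)

theorem countP_lt_countP_of_mem {p q : α → Bool} {l : List α} {e : α}
    (hqp : ∀ a ∈ l, q a → p a) (he : e ∈ l) (hpe : p e) (hqe : ¬ q e) :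
    l.countP q < l.countP p := by
  obtain ⟨s, t, rfl⟩ := append_of_mem he
  have hs := countP_mono_left fun a ha => hqp a (mem_append_left _ ha)
  have ht := countP_mono_left fun a ha => hqp a (mem_append_right _ (mem_cons_of_mem e ha))
  simp only [countP_append, countP_cons, hpe, hqe, if_true, Bool.false_eq_true, if_false]
  omega

theorem pairwise_lt_mergeSort {l : List α} (hl : (l.map key).Nodup) :
    (l.mergeSort fun a b => decide (key a ≤ key b)).Pairwise (key · < key ·) := by
  have hsorted := pairwise_mergeSort (le := fun a b => decide (key a ≤ key b))
    (fun _ _ _ hab hbc => by simp_all only [decide_eq_true_eq]; exact hab.trans hbc)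
    (fun a b => by simpa using le_total (key a) (key b)) l
  have hnodup : ((l.mergeSort fun a b => decide (key a ≤ key b)).map key).Nodup :=
    ((mergeSort_perm l _).map key).nodup_iff.mpr hl
  exact ((hsorted.and (pairwise_map.mp hnodup)).imp
    fun h => lt_of_le_of_ne (by simpa using h.1) h.2)

theorem mem_take_iff_countP_le {l : List α} (hl : l.Pairwise (key · < key ·)) (k : ℕ)
    (e : α) :
    e ∈ l.take k ↔ e ∈ l ∧ l.countP (fun a => decide (key a ≤ key e)) ≤ k := by
  induction l generalizing k with
  | nil => simp
  | cons a t ih =>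
    obtain ⟨hat, ht⟩ := pairwise_cons.mp hl
    cases k with
    | zero =>
      simp only [take_zero, not_mem_nil, false_iff, not_and, Nat.le_zero, countP_eq_zero,
        not_forall]
      exact fun he => ⟨e, he, by simp⟩
    | succ k =>
      by_cases hea : e = a
      · subst hea
        have : t.countP (fun b => decide (key b ≤ key e)) = 0 :=
          countP_eq_zero.mpr fun b hb => by simpa using hat b hb
        simp [this]
      · by_cases het : e ∈ t
        · simp [hea, ih ht, het, (hat e het).le]
        · simpa [hea, het] using mt mem_of_mem_take het

theorem take_mergeSort_eq_of_sublist {A B : List α} (hAB : A <+ B) (hB : (B.map key).Nodup)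
    (k : ℕ) (hfar : ∀ e ∈ B, e ∉ A → k ≤ A.countP (fun a => decide (key a < key e))) :
    (A.mergeSort fun a b => decide (key a ≤ key b)).take k =
      (B.mergeSort fun a b => decide (key a ≤ key b)).take k := by
  set cmp := fun a b => decide (key a ≤ key b)
  have hsA := pairwise_lt_mergeSort key ((hAB.map key).nodup hB)
  have hsB := pairwise_lt_mergeSort key hB
  have hA' := hsA.sublist (take_sublist k _)
  have hB' := hsB.sublist (take_sublist k _)
  have hmem : ∀ e, e ∈ (A.mergeSort cmp).take k ↔ e ∈ (B.mergeSort cmp).take k := by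
    intro e
    rw [mem_take_iff_countP_le key hsA, mem_take_iff_countP_le key hsB, mem_mergeSort,
      mem_mergeSort, (mergeSort_perm A _).countP_eq, (mergeSort_perm B _).countP_eq]
    constructor
    · rintro ⟨heA, hcA⟩
      refine ⟨hAB.subset heA, le_trans ?_ hcA⟩
      rw [countP_eq_length_filter, countP_eq_length_filter]
      refine ((hB.of_map.filter _).subperm fun b hb => ?_).length_le
      obtain ⟨hbB, hbp⟩ := mem_filter.mp hb
      refine mem_filter.mpr ⟨?_, hbp⟩
      by_contra hbA
      have hbe : key b ≤ key e := by simpa using hbp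
      have := countP_lt_countP_of_mem (p := fun a => decide (key a ≤ key e))
        (q := fun a => decide (key a < key b))
        (fun a _ h => by simpa using ((by simpa using h : key a < key b).trans_le hbe).le)
        heA (by simp) (by simpa using hbe)
      linarith [hfar b hbB hbA]
    · rintro ⟨heB, hcB⟩
      have heA : e ∈ A := by
        by_contra heA
        have := countP_lt_countP_of_mem (p := fun a => decide (key a ≤ key e))
          (q := fun a => decide (key a < key e))
          (fun a _ h => by simpa using (by simpa using h : key a < key e).le)
          heB (by simp) (by simp)
        linarith [hfar e heB heA, hAB.countP_le (p := fun a => decide (key a < key e))]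
      exact ⟨heA, (hAB.countP_le).trans hcB⟩
  refine Perm.eq_of_pairwise (fun a b _ _ hab hba => absurd hab (lt_asymm hba)) hA' hB'
    ((perm_ext_iff_of_nodup (hA'.imp ?_) (hB'.imp ?_)).mpr hmem)
  all_goals exact fun h heq => h.ne (congrArg key heq)

theorem getElem_le_iff_lt_countP {l : List β} (hl : l.Pairwise (· ≤ ·)) {i : ℕ}
    (hi : i < l.length) (t : β) : l[i] ≤ t ↔ i < l.countP (fun a => decide (a ≤ t)) := by
  induction l generalizing i with
  | nil => simp at hi
  | cons a l ih =>
    obtain ⟨hal, hl⟩ := pairwise_cons.mp hl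
    by_cases hat : a ≤ t
    · cases i with
      | zero => simp [hat]
      | succ i => simpa [countP_cons, hat] using ih hl (by simpa using hi)
    · have hl0 : l.countP (fun b => decide (b ≤ t)) = 0 :=
        countP_eq_zero.mpr fun b hb => by simpa using fun hbt => hat ((hal b hb).trans hbt)
      cases i with
      | zero => simp [hat, hl0]
      | succ i =>
        simpa [countP_cons, hat, hl0] using fun h => hat ((hal _ (getElem_mem _)).trans h)

end List

section OrderStatistic

variable {X : Type*} [MetricSpace X]

theorem kthDist_le_iff {k : ℕ} {L : List X} (hk : 1 ≤ k) (hkL : k ≤ L.length) (x : X)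
    (t : ℝ) :
    kthDist k L x ≤ t ↔ k ≤ L.countP (fun p => decide (dist x p ≤ t)) := by
  have hlen : k - 1 < ((L.map (dist x)).mergeSort fun a b => decide (a ≤ b)).length := by
    simp only [List.length_mergeSort, List.length_map]; omega
  rw [kthDist, List.getD_eq_getElem _ _ hlen,
    List.getElem_le_iff_lt_countP (List.pairwise_mergeSort' _ _),
    (List.mergeSort_perm _ _).countP_eq, List.countP_map]
  change k - 1 < L.countP (fun p => decide (dist x p ≤ t)) ↔ _
  omega

theorem le_countP_le_kthDist {k : ℕ} {L : List X} (hk : 1 ≤ k) (hkL : k ≤ L.length) (x : X) :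
    k ≤ L.countP (fun p => decide (dist x p ≤ kthDist k L x)) :=
  (kthDist_le_iff hk hkL x _).mp le_rfl

end OrderStatistic

section Measurability

variable {X : Type*} [MeasurableSpace X]

theorem measurable_decide {p : X → Prop} [DecidablePred p] (hp : MeasurableSet {x | p x}) :
    Measurable fun x => decide (p x) :=
  measurable_to_bool (by convert hp using 1; ext x; simp)

theorem measurable_countP {α : Type*} {q : X → α → Bool} (hq : ∀ a, Measurable (q · a))
    (L : List α) : Measurable fun x => L.countP (q x) := by
  induction L with
  | nil => simp
  | cons a L ih =>
    simp only [List.countP_cons]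
    exact ih.add (Measurable.ite ((hq a) (measurableSet_singleton true)) measurable_const
      measurable_const)

variable [MetricSpace X] [BorelSpace X]

theorem measurable_kthDist {k : ℕ} {L : List X} (hk : 1 ≤ k) (hkL : k ≤ L.length) :
    Measurable (kthDist k L) := by
  refine measurable_of_Iic fun t => ?_
  have hcount : Measurable fun x => L.countP (fun p => decide (dist x p ≤ t)) :=
    measurable_countP (fun p => measurable_decide (measurableSet_le
      (continuous_id.dist continuous_const).measurable measurable_const)) L
  convert hcount measurableSet_Ici using 1
  ext x
  exact kthDist_le_iff hk hkL x t

/-- `knnLabel k L x` depends on `x` only through the finitely many comparisons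
`dist x L[i].1 ≤ dist x L[j].1`. -/
theorem measurable_knnLabel (k : ℕ) (L : List (X × Bool)) : Measurable (knnLabel k L) := by
  let cmp : X → Fin L.length → Fin L.length → Bool := fun x i j =>
    decide (dist x L[i.1].1 ≤ dist x L[j.1].1)
  let label : (Fin L.length → Fin L.length → Bool) → Bool := fun c =>
    decide (k < 2 * ((((List.finRange L.length).mergeSort fun i j => c i j).map
      (fun i => L[i.1])).take k |>.filter (·.2)).length)
  have hfactor : knnLabel k L = label ∘ cmp := by
    funext x
    simp only [knnLabel, Function.comp, label, cmp]
    rw [List.map_mergeSort (f := fun i : Fin L.length => L[i.1])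
      (s := fun a b : X × Bool => decide (dist x a.1 ≤ dist x b.1)) fun _ _ _ _ => rfl,
      List.map_getElem_finRange]
  have hcmp : Measurable cmp := measurable_pi_lambda _ fun i => measurable_pi_lambda _ fun j =>
    measurable_decide (measurableSet_le (continuous_id.dist continuous_const).measurable
      (continuous_id.dist continuous_const).measurable)
  rw [hfactor]
  exact (measurable_of_countable label).comp hcmp

end Measurability

section Sample

variable {n m r k : ℕ}

theorem card_blockIdx_le (n m : ℕ) (i : Fin r) : #(blockIdx n m i) ≤ m := by
  have hsub : (blockIdx n m i).map Fin.valEmbedding ⊆ Ico (m * i) (m * (i + 1)) := by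
    intro j hj
    simp only [blockIdx, mem_map, mem_filter, mem_univ, true_and, Fin.valEmbedding_apply] at hj
    obtain ⟨j, hj, rfl⟩ := hj
    exact mem_Ico.mpr hj
  simpa [Nat.mul_succ] using card_le_card hsub

theorem le_card_compl_VIdx_univ (hn : r * m ≤ n - k) (hkn : k ≤ n) :
    k ≤ #(VIdx n m r univ)ᶜ := by
  have hV : #(VIdx n m r univ) ≤ r * m := card_biUnion_le.trans <| by
    simpa using sum_le_sum fun i (_ : i ∈ univ) => card_blockIdx_le n m i
  rw [card_compl, Fintype.card_fin]
  omega

theorem trainIdx_univ : trainIdx n m r univ = univ := by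
  rw [trainIdx, union_comm, union_compl]

variable {α : Type*} {F : Fin n → α}

theorem length_subList (A : Finset (Fin n)) : (subList F A).length = #A := by
  simp [subList]

theorem mem_subList {A : Finset (Fin n)} {e : α} : e ∈ subList F A ↔ ∃ j ∈ A, F j = e := by
  simp [subList]

theorem subList_sublist {A B : Finset (Fin n)} (h : A ⊆ B) :
    (subList F A).Sublist (subList F B) :=
  (List.sublist_of_subperm_of_pairwise
    (List.subperm_of_subset (sort_nodup _ _) fun j hj => by simpa using h (by simpa using hj))
    (pairwise_sort _ _) (pairwise_sort _ _)).map F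

theorem subList_comp {β : Type*} (f : α → β) (A : Finset (Fin n)) :
    subList (f ∘ F) A = (subList F A).map f := by
  simp [subList]

end Sample

section Classifier

variable {X : Type*} [MetricSpace X] {n m r k : ℕ} (F : Fin n → X × Bool)

/-- `b_S(x)` holds exactly for `S = nearBlocks n m r k F x`. -/
noncomputable def nearBlocks (n m r k : ℕ) (F : Fin n → X × Bool) (x : X) : Finset (Fin r) :=
  univ.filter fun i => ∃ j ∈ blockIdx n m i, dist x (F j).1 < hDist n m r k F x

theorem cCond_iff_subset_nearBlocks {S : Finset (Fin r)} {x : X} :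
    cCond n m r k F S x ↔ S ⊆ nearBlocks n m r k F x := by
  simp [cCond, nearBlocks, subset_iff]

theorem le_countP_le_hDist (hk : 1 ≤ k) (hcard : k ≤ #(VIdx n m r univ)ᶜ) (x : X) :
    k ≤ (subList F (VIdx n m r univ)ᶜ).countP
      (fun a => decide (dist x a.1 ≤ hDist n m r k F x)) := by
  have hL := le_countP_le_kthDist (L := subList (Prod.fst ∘ F) (VIdx n m r univ)ᶜ) hk
    (by rwa [length_subList]) x
  change k ≤ List.countP (fun p => decide (dist x p ≤ hDist n m r k F x)) _ at hL
  rwa [subList_comp, List.countP_map] at hL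

theorem gS_eq_gS_univ (hk : 1 ≤ k) (hcard : k ≤ #(VIdx n m r univ)ᶜ) {x : X}
    (hx : ∀ i j, i ≠ j → dist x (F i).1 ≠ dist x (F j).1) {S : Finset (Fin r)}
    (hS : nearBlocks n m r k F x ⊆ S) :
    gS n m r k F S x = gS n m r k F univ x := by
  let key : X × Bool → ℝ := fun p => dist x p.1
  have hB : ((subList F (trainIdx n m r univ)).map key).Nodup := by
    rw [trainIdx_univ, ← subList_comp]
    exact (sort_nodup _ _).map fun i j hij => by_contra fun hne => hx i j hne hij
  have hAB : (subList F (trainIdx n m r S)).Sublist (subList F (trainIdx n m r univ)) :=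
    subList_sublist (by simp [trainIdx_univ])
  unfold gS knnLabel
  refine congrArg (fun l => decide (k < 2 * (l.filter (·.2)).length))
    (List.take_mergeSort_eq_of_sublist key hAB hB k ?_)
  intro e heB heA
  obtain ⟨j, -, rfl⟩ := mem_subList.mp heB
  have hjV : j ∈ VIdx n m r univ := by
    by_contra hjV
    exact heA (mem_subList.mpr ⟨j, mem_union_left _ (mem_compl.mpr hjV), rfl⟩)
  obtain ⟨i, -, hji⟩ := mem_biUnion.mp hjV
  have hiS : i ∉ S := fun hi =>
    heA (mem_subList.mpr ⟨j, mem_union_right _ (mem_biUnion.mpr ⟨i, hi, hji⟩), rfl⟩)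
  have hjfar : hDist n m r k F x ≤ key (F j) := by
    by_contra hlt
    exact hiS (hS (by simpa [nearBlocks] using ⟨j, hji, not_le.mp hlt⟩))
  refine (le_countP_le_hDist F hk hcard x).trans <| le_trans ?_
    ((subList_sublist subset_union_left).countP_le)
  refine List.countP_mono_left fun a ha hah => ?_
  obtain ⟨j', hj', rfl⟩ := mem_subList.mp ha
  have hne : j' ≠ j := fun h => mem_compl.mp hj' (h ▸ hjV)
  simpa using lt_of_le_of_ne ((by simpa using hah : _ ≤ _).trans hjfar) (hx j' j hne)

end Classifier

section Events

variable {X : Type*} [MetricSpace X] [MeasurableSpace X] [BorelSpace X] {n m r k : ℕ}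
  (F : Fin n → X × Bool)

theorem measurableSet_error (S : Finset (Fin r)) :
    MeasurableSet {p : X × Bool | gS n m r k F S p.1 ≠ p.2} :=
  (measurableSet_eq_fun ((measurable_knnLabel k _).comp measurable_fst) measurable_snd).compl

theorem measurableSet_CST (hk : 1 ≤ k) (hcard : k ≤ #(VIdx n m r univ)ᶜ)
    (S T : Finset (Fin r)) :
    MeasurableSet (CST n m r k F S T) := by
  have hh : Measurable (hDist n m r k F) := measurable_kthDist hk (by rwa [length_subList])
  have hc : MeasurableSet {x : X | cCond n m r k F (S ∪ T) x} := by
    have : {x : X | cCond n m r k F (S ∪ T) x} =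
        ⋂ i ∈ ((S ∪ T : Finset (Fin r)) : Set (Fin r)),
          ⋃ j ∈ (blockIdx n m i : Set (Fin n)), {x | dist x (F j).1 < hDist n m r k F x} := by
      ext x
      simp [cCond]
    rw [this]
    exact .biInter (Set.to_countable _) fun i _ => .biUnion (Set.to_countable _) fun j _ =>
      measurableSet_lt (continuous_id.dist continuous_const).measurable hh
  exact (measurable_fst hc).inter (measurableSet_error F S)

end Events

section InclusionExclusion

variable {ι R : Type*} [Fintype ι] [DecidableEq ι] [CommRing R]

theorem sum_powerset_compl_neg_one_pow_mul_ite_union_subset (S S₀ : Finset ι) (c : R) :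
    ∑ T ∈ Sᶜ.powerset, (-1 : R) ^ #T * (if S ∪ T ⊆ S₀ then c else 0) =
      if S = S₀ then c else 0 := by
  by_cases hS : S ⊆ S₀
  · have hfilter : Sᶜ.powerset.filter (S ∪ · ⊆ S₀) = (S₀ \ S).powerset := by
      ext T
      simp only [mem_filter, mem_powerset, union_subset_iff, hS, true_and, subset_sdiff,
        subset_compl_iff_disjoint_right, and_comm]
    have halt := congrArg (Int.cast : ℤ → R) (sum_powerset_neg_one_pow_card (x := S₀ \ S))
    push_cast at halt
    simp_rw [mul_ite, mul_zero]
    rw [← sum_filter, hfilter, ← sum_mul, halt]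
    have : S₀ \ S = ∅ ↔ S = S₀ := by
      rw [sdiff_eq_empty_iff_subset]
      exact ⟨hS.antisymm, fun h => h ▸ subset_rfl⟩
    simp [this]
  · rw [if_neg (fun h => hS h.le)]
    refine sum_eq_zero fun T _ => ?_
    rw [if_neg (fun h => hS (subset_union_left.trans h)), mul_zero]

theorem sum_sum_powerset_compl_neg_one_pow_mul_ite_union_subset (S₀ : Finset ι)
    (f : Finset ι → R) :
    ∑ S, ∑ T ∈ Sᶜ.powerset, (-1 : R) ^ #T * (if S ∪ T ⊆ S₀ then f S else 0) =
      f S₀ := by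
  simp only [sum_powerset_compl_neg_one_pow_mul_ite_union_subset, sum_ite_eq', mem_univ,
    if_true]

end InclusionExclusion

theorem indicator_error_eq_sum_indicator_CST {X : Type*} [MetricSpace X] {n m r k : ℕ}
    (F : Fin n → X × Bool) (hk : 1 ≤ k) (hcard : k ≤ #(VIdx n m r univ)ᶜ) {z : X × Bool}
    (hz : ∀ i j, i ≠ j → dist z.1 (F i).1 ≠ dist z.1 (F j).1) :
    {p : X × Bool | gS n m r k F univ p.1 ≠ p.2}.indicator (1 : X × Bool → ℝ) z =
      ∑ S : Finset (Fin r), ∑ T ∈ Sᶜ.powerset,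
        (-1 : ℝ) ^ #T * (CST n m r k F S T).indicator 1 z := by
  let error : Finset (Fin r) → ℝ := fun S =>
    {p : X × Bool | gS n m r k F S p.1 ≠ p.2}.indicator 1 z
  have hCST : ∀ S T, (CST n m r k F S T).indicator (1 : X × Bool → ℝ) z =
      if S ∪ T ⊆ nearBlocks n m r k F z.1 then error S else 0 := by
    intro S T
    simp only [CST, error, Set.indicator_apply, Set.mem_ofPred_eq, cCond_iff_subset_nearBlocks]
    split_ifs <;> simp_all
  simp_rw [hCST]
  rw [sum_sum_powerset_compl_neg_one_pow_mul_ite_union_subset]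
  simp only [error, Set.indicator_apply, Set.mem_ofPred_eq,
    gS_eq_gS_univ F hk hcard hz subset_rfl]

theorem knn_inclusion_exclusion_identity_general
    {X : Type*} [MetricSpace X] [MeasurableSpace X] [BorelSpace X]
    (D : MeasureTheory.Measure (X × Bool)) [MeasureTheory.IsProbabilityMeasure D]
    (n r m k : ℕ) (hk : 1 ≤ k)
    (hn : r * m ≤ n - k) (hkn : k ≤ n)
    (hdistinct :
      ∀ᵐ z ∂((MeasureTheory.Measure.pi fun _ : Fin n => D).prod (D.map Prod.fst)),
        DistinctDists z.1 z.2) :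
    ∀ᵐ F ∂(MeasureTheory.Measure.pi fun _ : Fin n => D),
      pStar n m r k D F =
        ∑ S : Finset (Fin r), ∑ T ∈ Sᶜ.powerset,
          (-1 : ℝ) ^ T.card * (D (CST n m r k F S T)).toReal := by
  filter_upwards [Measure.ae_ae_of_ae_prod hdistinct] with F hF
  have hcard := le_card_compl_VIdx_univ (m := m) (r := r) hn hkn
  have hF' : ∀ᵐ z ∂D, DistinctDists F z.1 := ae_of_ae_map measurable_fst.aemeasurable hF
  have hint : ∀ S T, Integrable ((CST n m r k F S T).indicator (1 : X × Bool → ℝ)) D :=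
    fun S T => (integrable_const 1).indicator (measurableSet_CST F hk hcard S T)
  calc pStar n m r k D F
      = ∫ z, {p : X × Bool | gS n m r k F univ p.1 ≠ p.2}.indicator 1 z ∂D :=
        (integral_indicator_one (measurableSet_error F univ)).symm
    _ = ∫ z, ∑ S : Finset (Fin r), ∑ T ∈ Sᶜ.powerset,
          (-1 : ℝ) ^ #T * (CST n m r k F S T).indicator 1 z ∂D :=
        integral_congr_ae (hF'.mono fun z hz =>
          indicator_error_eq_sum_indicator_CST F hk hcard hz.1)
    _ = _ := by
        rw [integral_finsetSum _ fun S _ => integrable_finsetSum _ fun T _ =>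
          (hint S T).const_mul _]
        refine sum_congr rfl fun S _ => ?_
        rw [integral_finsetSum _ fun T _ => (hint S T).const_mul _]
        simp only [integral_const_mul, integral_indicator_one (measurableSet_CST F hk hcard S _)]
        rfl

/-- Inclusion–exclusion identity for the out-of-sample error rate of the full classifier:
`p* = Σ_{S⊆R} Σ_{T⊆R−S} (−1)^{|T|} P(C_{S,T})` (for almost every draw of `F`,
given that nearest-neighbor rankings are almost surely unambiguous). -/
theorem knn_inclusion_exclusion_identity
    {X : Type*} [MetricSpace X] [MeasurableSpace X] [BorelSpace X]
    (D : MeasureTheory.Measure (X × Bool)) [MeasureTheory.IsProbabilityMeasure D]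
    (n r m k : ℕ) (hr : 1 ≤ r) (hm : 1 ≤ m) (hk : 1 ≤ k) (hkodd : Odd k)
    (hn : r * m ≤ n - k) (hkn : k ≤ n)
    (hdistinct :
      ∀ᵐ z ∂((MeasureTheory.Measure.pi fun _ : Fin n => D).prod (D.map Prod.fst)),
        DistinctDists z.1 z.2) :
    ∀ᵐ F ∂(MeasureTheory.Measure.pi fun _ : Fin n => D),
      pStar n m r k D F =
        ∑ S : Finset (Fin r), ∑ T ∈ Sᶜ.powerset,
          (-1 : ℝ) ^ T.card * (D (CST n m r k F S T)).toReal :=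
  knn_inclusion_exclusion_identity_general D n r m k hk hn hkn hdistinct
end

section
/- μ(e_R) = Σ_{S⊆R} Σ_{T⊆R−S} (−1)^{|T|} μ(c_{S∪T} ∩ e_S), where the sum ranges over all subsets S of R and all subsets T of R−S. -/
/-!
Split `Ω` into the atoms `b_S` of the family `c`. On `b_S` the event `e_R` may be replaced by
`e_S`, and inclusion–exclusion over the complement `R − S` expresses `μ(b_S ∩ e_S)` as the inner
sum over `T ⊆ R − S`; summing over `S` gives `μ(e_R)`.
-/

open MeasureTheory Finset

section

variable {Ω ι : Type*} [MeasurableSpace Ω] {μ : Measure Ω} [IsFiniteMeasure μ] {c : ι → Set Ω}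

theorem measureReal_inter_biInter_compl [DecidableEq ι] (hc : ∀ i, MeasurableSet (c i))
    (U : Finset ι) (A : Set Ω) :
    μ.real (A ∩ ⋂ i ∈ U, (c i)ᶜ) =
      ∑ T ∈ U.powerset, (-1 : ℝ) ^ #T * μ.real (A ∩ ⋂ i ∈ T, c i) := by
  induction U using Finset.induction_on generalizing A with
  | empty => simp
  | insert a s ha ih =>
    have hsplit : μ.real (A ∩ ⋂ i ∈ insert a s, (c i)ᶜ) =
        μ.real (A ∩ ⋂ i ∈ s, (c i)ᶜ) - μ.real ((A ∩ c a) ∩ ⋂ i ∈ s, (c i)ᶜ) := by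
      have hdiff : (A ∩ ⋂ i ∈ s, (c i)ᶜ) \ c a = A ∩ ⋂ i ∈ insert a s, (c i)ᶜ := by
        rw [set_biInter_insert, Set.sdiff_eq, Set.inter_comm (c a)ᶜ, Set.inter_assoc]
      rw [eq_sub_iff_add_eq, ← hdiff, Set.inter_right_comm, add_comm,
        measureReal_inter_add_sdiff (hc a)]
    have hinsert : ∀ T ∈ s.powerset,
        (-1 : ℝ) ^ #(insert a T) * μ.real (A ∩ ⋂ i ∈ insert a T, c i) =
          -((-1 : ℝ) ^ #T * μ.real ((A ∩ c a) ∩ ⋂ i ∈ T, c i)) := by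
      intro T hT
      rw [card_insert_of_notMem fun haT ↦ ha (mem_powerset.mp hT haT), set_biInter_insert,
        ← Set.inter_assoc, pow_succ]
      ring
    rw [hsplit, ih, ih, sum_powerset_insert ha, sum_congr rfl hinsert, sum_neg_distrib,
      sub_eq_add_neg]

end

section

variable {Ω ι : Type*} [Fintype ι] [DecidableEq ι] {c : ι → Set Ω}

variable (c) in
def atom (S : Finset ι) : Set Ω := (⋂ i ∈ S, c i) ∩ ⋂ i ∈ Sᶜ, (c i)ᶜ

theorem mem_atom_iff {S : Finset ι} {ω : Ω} : ω ∈ atom c S ↔ ∀ i, i ∈ S ↔ ω ∈ c i := by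
  simp only [atom, Set.mem_inter_iff, Set.mem_iInter, mem_compl, Set.mem_compl_iff]
  exact ⟨fun h i ↦ ⟨h.1 i, not_imp_not.mp (h.2 i)⟩,
    fun h ↦ ⟨fun i ↦ (h i).1, fun i ↦ mt (h i).2⟩⟩

variable (c) in
theorem pairwise_disjoint_atom : Pairwise (Function.onFun Disjoint (atom c)) := by
  intro S S' hne
  refine Set.disjoint_left.mpr fun ω hS hS' ↦ hne ?_
  ext i
  rw [mem_atom_iff.mp hS, mem_atom_iff.mp hS']

variable (c) in
theorem iUnion_atom : ⋃ S, atom c S = Set.univ := by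
  classical
  refine Set.eq_univ_of_forall fun ω ↦ Set.mem_iUnion.mpr ⟨univ.filter (ω ∈ c ·), ?_⟩
  simp [mem_atom_iff]

variable [MeasurableSpace Ω]

theorem measurableSet_atom (hc : ∀ i, MeasurableSet (c i)) (S : Finset ι) :
    MeasurableSet (atom c S) :=
  (measurableSet_biInter S fun i _ ↦ hc i).inter (measurableSet_biInter Sᶜ fun i _ ↦ (hc i).compl)

variable {μ : Measure Ω} [IsFiniteMeasure μ]

theorem sum_measureReal_atom_inter (hc : ∀ i, MeasurableSet (c i)) (s : Set Ω) :
    ∑ S, μ.real (atom c S ∩ s) = μ.real s := by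
  rw [← measureReal_restrict_apply_univ, ← iUnion_atom c,
    measureReal_iUnion_fintype (pairwise_disjoint_atom c) (measurableSet_atom hc)]
  simp only [measureReal_restrict_apply (measurableSet_atom hc _)]

theorem sum_powerset_compl_measureReal_eq_atom (hc : ∀ i, MeasurableSet (c i)) (S : Finset ι)
    (E : Set Ω) :
    ∑ T ∈ Sᶜ.powerset, (-1 : ℝ) ^ #T * μ.real ((⋂ i ∈ S ∪ T, c i) ∩ E) =
      μ.real (atom c S ∩ E) := by
  have hunion : ∀ T : Finset ι,
      (⋂ i ∈ S ∪ T, c i) ∩ E = ((⋂ i ∈ S, c i) ∩ E) ∩ ⋂ i ∈ T, c i := by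
    intro T
    ext
    simp only [mem_union, Set.mem_inter_iff, Set.mem_iInter, or_imp, forall_and]
    tauto
  simp only [hunion, atom, Set.inter_right_comm _ _ E,
    ← measureReal_inter_biInter_compl hc]

end

theorem measure_family_inclusion_exclusion_general
    {Ω : Type*} [MeasurableSpace Ω] (μ : Measure Ω) [IsFiniteMeasure μ]
    (r : ℕ) (c : Fin r → Set Ω) (e : Finset (Fin r) → Set Ω)
    (hc : ∀ i, MeasurableSet (c i))
    (hbe : ∀ S : Finset (Fin r),
      (⋂ i ∈ S, c i) ∩ (⋂ i ∈ Sᶜ, (c i)ᶜ) ∩ e S =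
        (⋂ i ∈ S, c i) ∩ (⋂ i ∈ Sᶜ, (c i)ᶜ) ∩ e Finset.univ) :
    (μ (e Finset.univ)).toReal =
      ∑ S : Finset (Fin r), ∑ T ∈ Sᶜ.powerset,
        (-1 : ℝ) ^ T.card * (μ ((⋂ i ∈ S ∪ T, c i) ∩ e S)).toReal := by
  calc μ.real (e univ)
      = ∑ S, μ.real (atom c S ∩ e univ) := (sum_measureReal_atom_inter hc _).symm
    _ = ∑ S, μ.real (atom c S ∩ e S) := sum_congr rfl fun S _ ↦ by rw [atom, hbe]
    _ = _ := (sum_congr rfl fun S _ ↦ sum_powerset_compl_measureReal_eq_atom hc S (e S)).symm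

/-- For measurable events `c_1, …, c_r` in a probability space `(Ω, μ)`, with
`c_S = ∩_{i∈S} c_i` and `b_S = c_S ∩ ∩_{i∈R−S} c_iᶜ`, and a family of measurable
events `(e_S)_{S⊆R}` such that `b_S ∩ e_S = b_S ∩ e_R` for every `S`:
`μ(e_R) = Σ_{S⊆R} Σ_{T⊆R−S} (−1)^{|T|} μ(c_{S∪T} ∩ e_S)`. -/
theorem measure_family_inclusion_exclusion
    {Ω : Type*} [MeasurableSpace Ω] (μ : Measure Ω) [IsFiniteMeasure μ]
    (r : ℕ) (hr : 1 ≤ r) (c : Fin r → Set Ω) (e : Finset (Fin r) → Set Ω)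
    (hc : ∀ i, MeasurableSet (c i)) (he : ∀ S, MeasurableSet (e S))
    (hbe : ∀ S : Finset (Fin r),
      (⋂ i ∈ S, c i) ∩ (⋂ i ∈ Sᶜ, (c i)ᶜ) ∩ e S =
        (⋂ i ∈ S, c i) ∩ (⋂ i ∈ Sᶜ, (c i)ᶜ) ∩ e Finset.univ) :
    (μ (e Finset.univ)).toReal =
      ∑ S : Finset (Fin r), ∑ T ∈ Sᶜ.powerset,
        (-1 : ℝ) ^ T.card * (μ ((⋂ i ∈ S ∪ T, c i) ∩ e S)).toReal :=
  measure_family_inclusion_exclusion_general μ r c e hc hbe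
end

section
/- For all integers N, r, m, k with r ≥ 1, m ≥ 2, k ≥ 1, and rm + k ≤ N, the hypergeometric tail satisfies Σ_{i=r}^{k+r−1} C(k+r−1, i)·C(N−(k+r−1), rm−i) / C(N, rm) ≤ ( (k+r−1)·m/N )^r · e^r. -/
/-! Following Chvátal: with `n = k + r - 1`, a sample meeting the marked set in `i ≥ r` points
is overcounted by first choosing `r` of them, so by Vandermonde the tail is at most
`C(n, r) · C(N - r, rm - r) / C(N, rm)`. This ratio equals `∏_{j<r} (rm - j)/(N - j) ≤ (rm/N)^r`,
and `C(n, r) · r^r ≤ n^r · r^r / r! ≤ (e n)^r`. -/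

open Finset

namespace Nat

theorem descFactorial_mul_pow_le_of_le {M N : ℕ} (h : M ≤ N) (r : ℕ) :
    M.descFactorial r * N ^ r ≤ N.descFactorial r * M ^ r := by
  induction r with
  | zero => simp
  | succ r ih =>
    have hstep : N * (M - r) ≤ M * (N - r) := by
      rw [Nat.mul_sub, Nat.mul_sub, Nat.mul_comm N M]
      exact Nat.sub_le_sub_left (Nat.mul_le_mul_right r h) _
    calc M.descFactorial (r + 1) * N ^ (r + 1)
        = N * (M - r) * (M.descFactorial r * N ^ r) := by rw [descFactorial_succ]; ring
      _ ≤ M * (N - r) * (N.descFactorial r * M ^ r) := Nat.mul_le_mul hstep ih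
      _ = N.descFactorial (r + 1) * M ^ (r + 1) := by rw [descFactorial_succ]; ring

theorem choose_sub_mul_pow_le {r M N : ℕ} (hrM : r ≤ M) (hMN : M ≤ N) :
    (N - r).choose (M - r) * N ^ r ≤ N.choose M * M ^ r := by
  have hpos : 0 < r ! * N.choose r := Nat.mul_pos r.factorial_pos (choose_pos (hrM.trans hMN))
  refine Nat.le_of_mul_le_mul_left ?_ hpos
  calc r ! * N.choose r * ((N - r).choose (M - r) * N ^ r)
      = N.choose r * (N - r).choose (M - r) * (r ! * N ^ r) := by ring
    _ = N.choose M * (r ! * M.choose r * N ^ r) := by rw [← choose_mul hrM]; ring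
    _ = N.choose M * (M.descFactorial r * N ^ r) := by rw [descFactorial_eq_factorial_mul_choose]
    _ ≤ N.choose M * (N.descFactorial r * M ^ r) :=
        Nat.mul_le_mul_left _ (descFactorial_mul_pow_le_of_le hMN r)
    _ = r ! * N.choose r * (N.choose M * M ^ r) := by
        rw [descFactorial_eq_factorial_mul_choose]; ring

theorem choose_le_choose_mul_choose_sub {n i r : ℕ} (hri : r ≤ i) :
    n.choose i ≤ n.choose r * (n - r).choose (i - r) :=
  calc n.choose i ≤ n.choose i * i.choose r := Nat.le_mul_of_pos_right _ (choose_pos hri)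
    _ = n.choose r * (n - r).choose (i - r) := choose_mul hri

theorem sum_range_ite_choose_mul_choose_le (a b K t : ℕ) :
    ∑ j ∈ range t, (if j ≤ K then a.choose j * b.choose (K - j) else 0) ≤ (a + b).choose K := by
  rw [← sum_filter, add_choose_eq, Finset.Nat.sum_antidiagonal_eq_sum_range_succ_mk]
  refine sum_le_sum_of_subset fun j hj => ?_
  simp only [mem_filter, mem_range] at hj ⊢
  omega

theorem choose_mul_pow_le_exp_mul_pow (n r : ℕ) :
    (n.choose r : ℝ) * r ^ r ≤ (Real.exp 1 * n) ^ r :=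
  calc (n.choose r : ℝ) * r ^ r ≤ (n ^ r / r ! : ℝ) * r ^ r := by
        gcongr; exact choose_le_pow_div r n
    _ = n ^ r * (r ^ r / r !) := by ring
    _ ≤ n ^ r * Real.exp r := by gcongr; exact Real.pow_div_factorial_le_exp _ (by positivity) r
    _ = (Real.exp 1 * n) ^ r := by rw [← Real.exp_one_pow, mul_pow, mul_comm]

end Nat

theorem sum_Icc_ite_choose_mul_choose_le (n r M L : ℕ) :
    (∑ i ∈ Icc r n, if i ≤ M then n.choose i * L.choose (M - i) else 0)
      ≤ n.choose r * (n - r + L).choose (M - r) := by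
  rw [← Ico_add_one_right_eq_Icc, sum_Ico_eq_sum_range]
  calc (∑ j ∈ range (n + 1 - r),
          if r + j ≤ M then n.choose (r + j) * L.choose (M - (r + j)) else 0)
      ≤ ∑ j ∈ range (n + 1 - r),
          n.choose r * (if j ≤ M - r then (n - r).choose j * L.choose (M - r - j) else 0) := by
        refine sum_le_sum fun j _ => ?_
        by_cases hle : r + j ≤ M
        · rw [if_pos hle, if_pos (by omega), Nat.sub_add_eq, ← mul_assoc]
          refine Nat.mul_le_mul_right _ ?_
          simpa only [Nat.add_sub_cancel_left] using
            Nat.choose_le_choose_mul_choose_sub (n := n) (Nat.le_add_right r j)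
        · rw [if_neg hle]
          exact Nat.zero_le _
    _ ≤ n.choose r * (n - r + L).choose (M - r) := by
        rw [← mul_sum]
        exact Nat.mul_le_mul_left _ (Nat.sum_range_ite_choose_mul_choose_le _ _ _ _)

theorem sum_Icc_ite_choose_mul_choose_div_le {n r M N : ℕ} (hrn : r ≤ n) (hnN : n ≤ N)
    (hrM : r ≤ M) (hMN : M ≤ N) :
    (∑ i ∈ Icc r n,
        if i ≤ M then (n.choose i : ℝ) * (N - n).choose (M - i) / N.choose M else 0)
      ≤ n.choose r * ((M : ℝ) / N) ^ r := by
  have hchoose : (0 : ℝ) < N.choose M := by exact_mod_cast Nat.choose_pos hMN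
  have hratio : ((N - r).choose (M - r) : ℝ) / N.choose M ≤ ((M : ℝ) / N) ^ r := by
    rcases r.eq_zero_or_pos with rfl | hr
    · simp [hchoose.ne']
    have hN : (0 : ℝ) < N := by exact_mod_cast hr.trans_le (hrM.trans hMN)
    rw [div_pow, div_le_div_iff₀ hchoose (by positivity), mul_comm ((M : ℝ) ^ r)]
    exact_mod_cast Nat.choose_sub_mul_pow_le hrM hMN
  have hunion := sum_Icc_ite_choose_mul_choose_le n r M (N - n)
  rw [show n - r + (N - n) = N - r by omega] at hunion
  calc (∑ i ∈ Icc r n,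
        if i ≤ M then (n.choose i : ℝ) * (N - n).choose (M - i) / N.choose M else 0)
      = ((∑ i ∈ Icc r n, if i ≤ M then n.choose i * (N - n).choose (M - i) else 0 : ℕ) : ℝ)
          / N.choose M := by
        simp only [Nat.cast_sum, Nat.cast_ite, Nat.cast_mul, Nat.cast_zero, sum_div, ite_div,
          zero_div]
    _ ≤ (n.choose r * (N - r).choose (M - r) : ℕ) / N.choose M :=
        div_le_div_of_nonneg_right (by exact_mod_cast hunion) hchoose.le
    _ = n.choose r * (((N - r).choose (M - r) : ℝ) / N.choose M) := by push_cast; ring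
    _ ≤ n.choose r * ((M : ℝ) / N) ^ r := by gcongr

theorem hypergeometric_tail_bound_general (N r m k : ℕ)
    (hm : 2 ≤ m) (hk : 1 ≤ k) (hN : r * m + k ≤ N) :
    (∑ i ∈ Finset.Icc r (k + r - 1),
        if i ≤ r * m then
          ((k + r - 1).choose i : ℝ) * ((N - (k + r - 1)).choose (r * m - i)) /
            (N.choose (r * m))
        else 0)
      ≤ (((k : ℝ) + r - 1) * m / N) ^ r * Real.exp 1 ^ r := by
  have hrM : r ≤ r * m := Nat.le_mul_of_pos_right r (by omega)
  have hcast : ((k + r - 1 : ℕ) : ℝ) = k + r - 1 := by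
    rw [Nat.cast_sub (by omega)]; push_cast; ring
  calc _ ≤ (k + r - 1).choose r * (((r * m : ℕ) : ℝ) / N) ^ r :=
        sum_Icc_ite_choose_mul_choose_div_le (by omega) (by omega) hrM (by omega)
    _ = (k + r - 1).choose r * r ^ r * ((m : ℝ) / N) ^ r := by push_cast; ring
    _ ≤ (Real.exp 1 * (k + r - 1 : ℕ)) ^ r * ((m : ℝ) / N) ^ r := by
        gcongr; exact Nat.choose_mul_pow_le_exp_mul_pow _ _
    _ = (((k : ℝ) + r - 1) * m / N) ^ r * Real.exp 1 ^ r := by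
        rw [hcast, ← mul_pow, ← mul_pow]; ring

/-- Hypergeometric tail bound (following Chvátal): for integers `N, r, m, k` with
`r ≥ 1`, `m ≥ 2`, `k ≥ 1` and `rm + k ≤ N`,
`Σ_{i=r}^{k+r−1} C(k+r−1, i)·C(N−(k+r−1), rm−i) / C(N, rm) ≤ ((k+r−1)·m/N)^r · e^r`
(where terms with `rm − i < 0` vanish). -/
theorem hypergeometric_tail_bound (N r m k : ℕ)
    (hr : 1 ≤ r) (hm : 2 ≤ m) (hk : 1 ≤ k) (hN : r * m + k ≤ N) :
    (∑ i ∈ Finset.Icc r (k + r - 1),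
        if i ≤ r * m then
          ((k + r - 1).choose i : ℝ) * ((N - (k + r - 1)).choose (r * m - i)) /
            (N.choose (r * m))
        else 0)
      ≤ (((k : ℝ) + r - 1) * m / N) ^ r * Real.exp 1 ^ r :=
  hypergeometric_tail_bound_general N r m k hm hk hN
end

section
/- For every integer r ≥ 1 and every real δ > 0, Σ_{j=0}^{r−1} C(r, j) · 2 · ( δ / (2·r·α(δ)) )^(r−j) ≤ δ. -/
/-!
The quotient `δ / (2 r α(δ))` is `L / r` with `L = log (1 + δ/2)`, and by the binomial theorem the
sum is `2 ((1 + L/r)^r - 1)`. Since `(1 + L/r)^r ≤ exp L = 1 + δ/2`, the sum is at most `δ`.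
-/

open Finset

theorem sum_range_choose_mul_pow_sub {R : Type*} [CommRing R] (r : ℕ) (x : R) :
    ∑ j ∈ range r, (r.choose j : R) * x ^ (r - j) = (1 + x) ^ r - 1 := by
  rw [add_pow, sum_range_succ, Nat.sub_self, Nat.choose_self]
  simp only [one_pow, one_mul, pow_zero, Nat.cast_one, mul_one, add_sub_cancel_right]
  exact sum_congr rfl fun j _ => mul_comm _ _

theorem one_add_div_pow_le_exp {t : ℝ} (ht : 0 ≤ t) (n : ℕ) : (1 + t / n) ^ n ≤ Real.exp t := by
  simpa [neg_div] using
    Real.one_sub_div_pow_le_exp_neg (n := n) (t := -t) (by linarith [n.cast_nonneg (α := ℝ)])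

theorem delta_allocation_valid_general (r : ℕ) (δ : ℝ) (hδ : 0 < δ) :
    ∑ j ∈ Finset.range r,
        (r.choose j : ℝ) * 2 *
          (δ / (2 * r * ((δ / 2) / Real.log (1 + δ / 2)))) ^ (r - j)
      ≤ δ := by
  set L := Real.log (1 + δ / 2)
  have hL : 0 ≤ L := Real.log_nonneg (by linarith)
  have hquot : δ / (2 * r * ((δ / 2) / L)) = L / r := by
    field_simp
  have hexpL : Real.exp L = 1 + δ / 2 := Real.exp_log (by linarith)
  rw [hquot]
  calc ∑ j ∈ range r, (r.choose j : ℝ) * 2 * (L / r) ^ (r - j)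
      = 2 * ((1 + L / r) ^ r - 1) := by
        rw [← sum_range_choose_mul_pow_sub, mul_sum]
        exact sum_congr rfl fun j _ => by ring
    _ ≤ 2 * (Real.exp L - 1) := by gcongr; exact one_add_div_pow_le_exp hL r
    _ = δ := by rw [hexpL]; ring

/-- For every integer `r ≥ 1` and real `δ > 0`, with `α(δ) = (δ/2)/ln(1 + δ/2)`:
`Σ_{j=0}^{r−1} C(r,j)·2·(δ/(2rα(δ)))^(r−j) ≤ δ`. -/
theorem delta_allocation_valid (r : ℕ) (hr : 1 ≤ r) (δ : ℝ) (hδ : 0 < δ) :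
    ∑ j ∈ Finset.range r,
        (r.choose j : ℝ) * 2 *
          (δ / (2 * r * ((δ / 2) / Real.log (1 + δ / 2)))) ^ (r - j)
      ≤ δ :=
  delta_allocation_valid_general r δ hδ
end
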